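/- arXiv:2402.18188 — 2 statements merged into one kernel-verified Lean document; each statement's English description precedes it below -/
import Mathlib

section
/- Let B be an n×n real matrix that is stable (all eigenvalues have negative real part) and D-unstable, i.e., there exists a positive diagonal matrix D such that B·D has an eigenvalue with positive real part. Then there exists a positive diagonal matrix D* such that B·D* has a purely imaginary nonzero eigenvalue or a zero eigenvalue; moreover since det(B·D*) ≠ 0, B·D* has a nonzero purely imaginary eigenvalue. -/
/-!
Along the path `D(t) = (1 - t) I + t D`, let `t₀` be the first time at which `B D(t)` has an
eigenvalue `μ` with `Re μ ≥ 0`. It exists because the eigenvalues stay bounded for `t ∈ [0, 1]`,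
so these times form a compact set, and `t₀ > 0` because `B` is stable. For `t < t₀` every root of
the monic characteristic polynomial `χ_t` lies in the open left half-plane, hence
`|χ_t(μ)| ≥ (Re μ)^n`; letting `t → t₀` forces `Re μ = 0`. Finally `μ ≠ 0`, since
`det (B D(t₀)) = det B · ∏ D(t₀)ᵢᵢ ≠ 0`.
-/

open Matrix Polynomial

open Set Filter Topology

theorem Polynomial.Monic.re_pow_natDegree_le_norm_eval {p : ℂ[X]} (hp : p.Monic)
    (hroots : ∀ r ∈ p.roots, r.re ≤ 0) {μ : ℂ} (hμ : 0 ≤ μ.re) :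
    μ.re ^ p.natDegree ≤ ‖p.eval μ‖ := by
  have hsplit : p.Splits := IsAlgClosed.splits p
  calc μ.re ^ p.natDegree = (p.roots.map fun _ => μ.re).prod := by
        rw [Multiset.map_const', Multiset.prod_replicate, hsplit.natDegree_eq_card_roots]
    _ ≤ (p.roots.map fun r => ‖μ - r‖).prod :=
        Multiset.prod_map_le_prod_map₀ _ _ (fun _ _ => hμ) fun r hr =>
          calc μ.re ≤ (μ - r).re := by rw [Complex.sub_re]; linarith [hroots r hr]
            _ ≤ ‖μ - r‖ := Complex.re_le_norm _
    _ = ‖p.eval μ‖ := by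
        simpa [hsplit.eval_eq_prod_roots_of_monic hp, Multiset.map_map] using
          (map_multiset_prod (normHom : ℂ →*₀ ℝ) (p.roots.map (μ - ·))).symm

namespace Matrix

variable {ι : Type*} [Fintype ι] [DecidableEq ι]

theorem isRoot_charpoly_zero_iff {R : Type*} [CommRing R] (A : Matrix ι ι R) :
    A.charpoly.IsRoot 0 ↔ A.det = 0 := by
  rw [IsRoot, eval_charpoly, map_zero, zero_sub, det_neg,
    (isUnit_neg_one.pow _).mul_right_eq_zero]

theorem continuous_eval_charpoly {R : Type*} [CommRing R] [TopologicalSpace R]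
    [IsTopologicalRing R] : Continuous fun p : Matrix ι ι R × R => p.1.charpoly.eval p.2 := by
  simp only [eval_charpoly, scalar_apply]
  fun_prop

section
open scoped Matrix.Norms.Operator

theorem isCompact_setOf_exists_isRoot_charpoly_re_nonneg {M : ℝ → Matrix ι ι ℂ}
    (hM : Continuous M) :
    IsCompact {t ∈ Icc (0 : ℝ) 1 | ∃ μ : ℂ, 0 ≤ μ.re ∧ (M t).charpoly.IsRoot μ} := by
  obtain ⟨C, hC⟩ := isCompact_Icc.exists_bound_of_continuousOn hM.continuousOn
  set K := {p : ℝ × ℂ | p.1 ∈ Icc 0 1 ∧ 0 ≤ p.2.re ∧ (M p.1).charpoly.eval p.2 = 0}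
  have hK_closed : IsClosed K :=
    (isClosed_Icc.preimage continuous_fst).inter <|
      (isClosed_Ici.preimage (Complex.continuous_re.comp continuous_snd)).inter <|
        isClosed_singleton.preimage <|
          continuous_eval_charpoly.comp ((hM.comp continuous_fst).prodMk continuous_snd)
  have hK_sub : K ⊆ Icc 0 1 ×ˢ Metric.closedBall 0 (C * ‖(1 : Matrix ι ι ℂ)‖) :=
    fun p ⟨ht, _, hroot⟩ => ⟨ht, mem_closedBall_zero_iff.2 <|
      (spectrum.norm_le_norm_mul_of_mem (mem_spectrum_iff_isRoot_charpoly.2 hroot)).trans <|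
        mul_le_mul_of_nonneg_right (hC p.1 ht) (norm_nonneg _)⟩
  convert ((isCompact_Icc.prod (isCompact_closedBall _ _)).of_isClosed_subset hK_closed
    hK_sub).image continuous_fst
  ext t
  simp [K, IsRoot]

end

theorem exists_isRoot_charpoly_re_eq_zero_of_continuous {M : ℝ → Matrix ι ι ℂ}
    (hM : Continuous M) (h₀ : ∀ μ : ℂ, (M 0).charpoly.IsRoot μ → μ.re < 0)
    (h₁ : ∃ μ : ℂ, 0 ≤ μ.re ∧ (M 1).charpoly.IsRoot μ) :
    ∃ t ∈ Icc (0 : ℝ) 1, ∃ μ : ℂ, μ.re = 0 ∧ (M t).charpoly.IsRoot μ := by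
  obtain ⟨t₀, ⟨ht₀, μ, hμ, hroot⟩, hleast⟩ :=
    (isCompact_setOf_exists_isRoot_charpoly_re_nonneg hM).exists_isLeast
      ⟨1, right_mem_Icc.2 zero_le_one, h₁⟩
  refine ⟨t₀, ht₀, μ, le_antisymm (not_lt.1 fun hpos => ?_) hμ, hroot⟩
  have ht₀_pos : 0 < t₀ := ht₀.1.lt_of_ne <| by rintro rfl; exact (h₀ μ hroot).not_ge hμ
  have hbound : ∀ t ∈ Ico 0 t₀, μ.re ^ Fintype.card ι ≤ ‖(M t).charpoly.eval μ‖ := by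
    intro t ht
    rw [← charpoly_natDegree_eq_dim (M t)]
    refine (M t).charpoly_monic.re_pow_natDegree_le_norm_eval (fun r hr => ?_) hμ
    by_contra! hre
    exact ht.2.not_ge <| hleast ⟨⟨ht.1, ht.2.le.trans ht₀.2⟩, r, hre.le,
      (mem_roots (M t).charpoly_monic.ne_zero).1 hr⟩
  have hlim : Tendsto (fun t => ‖(M t).charpoly.eval μ‖) (𝓝[<] t₀)
      (𝓝 ‖(M t₀).charpoly.eval μ‖) :=
    ((continuous_eval_charpoly.comp (hM.prodMk continuous_const)).norm.tendsto t₀).mono_left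
      nhdsWithin_le_nhds
  have := ge_of_tendsto hlim (eventually_of_mem (Ico_mem_nhdsLT ht₀_pos) hbound)
  rw [hroot.eq_zero, norm_zero] at this
  exact (pow_pos hpos _).not_ge this

end Matrix

theorem stable_D_unstable_imaginary_eigenvalue (n : ℕ) (B : Matrix (Fin n) (Fin n) ℝ)
    (hstable : ∀ μ : ℂ, ((B.map (Complex.ofReal)).charpoly).IsRoot μ → μ.re < 0)
    (hDunstable : ∃ d : Fin n → ℝ, (∀ i, 0 < d i) ∧ ∃ μ : ℂ, 0 < μ.re ∧
      (((B * Matrix.diagonal d).map (Complex.ofReal)).charpoly).IsRoot μ) :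
    ∃ d : Fin n → ℝ, (∀ i, 0 < d i) ∧ ∃ μ : ℂ, μ.re = 0 ∧ μ ≠ 0 ∧
      (((B * Matrix.diagonal d).map (Complex.ofReal)).charpoly).IsRoot μ := by
  obtain ⟨d, hd, μ₁, hμ₁, hroot₁⟩ := hDunstable
  set e : ℝ → Fin n → ℝ := fun t => (1 - t) • 1 + t • d
  have he_pos : ∀ t ∈ Icc (0 : ℝ) 1, ∀ i, 0 < e t i := fun t ht i =>
    convex_Ioi (0 : ℝ) one_pos (hd i) (sub_nonneg.2 ht.2) ht.1 (sub_add_cancel 1 t)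
  obtain ⟨t, ht, μ, hμ, hroot⟩ := exists_isRoot_charpoly_re_eq_zero_of_continuous
    (M := fun t => (B * diagonal (e t)).map Complex.ofReal) (by fun_prop)
    (by simpa [e] using hstable) ⟨μ₁, hμ₁.le, by simpa [e] using hroot₁⟩
  refine ⟨e t, he_pos t ht, μ, hμ, ?_, hroot⟩
  rintro rfl
  have hdet : ∀ A : Matrix (Fin n) (Fin n) ℝ, (A.map Complex.ofReal).det = A.det :=
    fun A => (Complex.ofRealHom.map_det A).symm
  have hB : B.det ≠ 0 := fun h =>
    (hstable 0 <| (isRoot_charpoly_zero_iff _).2 <| by rw [hdet, h, Complex.ofReal_zero]).false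
  rw [isRoot_charpoly_zero_iff, hdet, Complex.ofReal_eq_zero, det_mul, det_diagonal] at hroot
  exact mul_ne_zero hB (Finset.prod_ne_zero_iff.2 fun i _ => (he_pos t ht i).ne') hroot
end

section
/- If a real n×n matrix A fails to be a P₀⁻ matrix — i.e., some k×k principal minor of A is nonzero with sign (-1)^(k-1) — then A is D-unstable: there exists a positive diagonal matrix D such that A·D has an eigenvalue with positive real part. -/
open Matrix Polynomial

lemma coeff_mul_nonneg' {p q : ℝ[X]} (hp : ∀ m, 0 ≤ p.coeff m) (hq : ∀ m, 0 ≤ q.coeff m)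
    (m : ℕ) : 0 ≤ (p * q).coeff m := by
  rw [Polynomial.coeff_mul]
  exact Finset.sum_nonneg fun x _ => mul_nonneg (hp _) (hq _)

lemma coeff_one_nonneg (m : ℕ) : (0:ℝ) ≤ (1 : ℝ[X]).coeff m := by
  rw [← Polynomial.C_1, Polynomial.coeff_C]
  split <;> norm_num

/-- A monic real polynomial all of whose complex roots have nonpositive real part has
nonnegative coefficients. -/
lemma coeff_nonneg_of_roots_re_nonpos :
    ∀ N : ℕ, ∀ p : ℝ[X], p.natDegree ≤ N → p.Monic →
      (∀ z : ℂ, Polynomial.aeval z p = 0 → z.re ≤ 0) → ∀ m, 0 ≤ p.coeff m := by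
  intro N
  induction N with
  | zero =>
    intro p hd hm _ m
    rw [hm.natDegree_eq_zero.mp (Nat.le_zero.mp hd)]
    exact coeff_one_nonneg m
  | succ N ih =>
    intro p hd hm hroots m
    by_cases h0 : p.natDegree = 0
    · rw [hm.natDegree_eq_zero.mp h0]
      exact coeff_one_nonneg m
    · have hdeg : p.degree ≠ 0 := fun h =>
        h0 (Polynomial.natDegree_eq_zero_iff_degree_le_zero.mpr h.le)
      obtain ⟨z, hz⟩ := IsAlgClosed.exists_aeval_eq_zero ℂ p hdeg
      have hre : z.re ≤ 0 := hroots z hz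
      by_cases him : z.im = 0
      · -- real root
        have hzr : z = (z.re : ℂ) := Complex.ext rfl (by simp [him])
        have hr : p.IsRoot z.re := by
          have h1 : Polynomial.aeval ((z.re : ℝ) : ℂ) p = 0 := hzr ▸ hz
          erw [Polynomial.aeval_ofReal] at h1
          exact RCLike.ofReal_eq_zero.mp h1
        obtain ⟨q, hq⟩ := (Polynomial.dvd_iff_isRoot.mpr hr)
        have hqm : q.Monic := (monic_X_sub_C z.re).of_mul_monic_left (hq ▸ hm)
        have hdq : p.natDegree = 1 + q.natDegree := by
          rw [hq, (monic_X_sub_C z.re).natDegree_mul hqm, natDegree_X_sub_C]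
        have hqroots : ∀ w : ℂ, Polynomial.aeval w q = 0 → w.re ≤ 0 := by
          intro w hw
          exact hroots w (by rw [hq, _root_.map_mul, hw, mul_zero])
        have hqc := ih q (by omega) hqm hqroots
        have hlin : ∀ m, 0 ≤ (X - C z.re).coeff m := by
          intro m
          rw [Polynomial.coeff_sub, Polynomial.coeff_X, Polynomial.coeff_C]
          split <;> split <;> first | linarith | omega
        rw [hq]
        exact coeff_mul_nonneg' hlin hqc m
      · -- complex conjugate pair
        obtain ⟨q, hq⟩ := p.quadratic_dvd_of_aeval_eq_zero_im_ne_zero hz him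
        set quad : ℝ[X] := X ^ 2 - C (2 * z.re) * X + C (‖z‖ ^ 2) with hquad
        have hquadeq : quad = X ^ 2 + (C (-(2 * z.re)) * X + C (‖z‖ ^ 2)) := by
          rw [hquad, Polynomial.C_neg]; ring
        have hquadeq' : quad = C 1 * X ^ 2 + C (-(2 * z.re)) * X + C (‖z‖ ^ 2) := by
          rw [hquad, Polynomial.C_neg, Polynomial.C_1]; ring
        have hquadm : quad.Monic := by
          rw [hquadeq]
          refine (monic_X_pow 2).add_of_left (lt_of_le_of_lt Polynomial.degree_linear_le ?_)
          rw [Polynomial.degree_X_pow]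
          exact_mod_cast one_lt_two
        have hqm : q.Monic := hquadm.of_mul_monic_left (hq ▸ hm)
        have hdq : p.natDegree = 2 + q.natDegree := by
          rw [hq, hquadm.natDegree_mul hqm, hquadeq', natDegree_quadratic one_ne_zero]
        have hqroots : ∀ w : ℂ, Polynomial.aeval w q = 0 → w.re ≤ 0 := by
          intro w hw
          exact hroots w (by rw [hq, _root_.map_mul, hw, mul_zero])
        have hqc := ih q (by omega) hqm hqroots
        have hquadc : ∀ m, 0 ≤ quad.coeff m := by
          intro m
          have hval : quad.coeff m =
              (X ^ 2 : ℝ[X]).coeff m - 2 * z.re * (X : ℝ[X]).coeff m +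
                (C (‖z‖ ^ 2) : ℝ[X]).coeff m := by
            rw [hquad, Polynomial.coeff_add, Polynomial.coeff_sub, Polynomial.coeff_C_mul]
          rw [hval, Polynomial.coeff_X_pow, Polynomial.coeff_X, Polynomial.coeff_C]
          have hn : (0:ℝ) ≤ ‖z‖ ^ 2 := by positivity
          split <;> split <;> split <;> first | linarith | omega
        rw [hq]
        exact coeff_mul_nonneg' hquadc hqc m


lemma charpoly_of_zero_cols {n : ℕ} (S : Finset (Fin n)) (M : Matrix (Fin n) (Fin n) ℝ)
    (hM : ∀ i j, j ∉ S → M i j = 0) :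
    M.charpoly = (M.submatrix (fun i : {x // x ∈ S} => (i : Fin n))
        (fun j : {x // x ∈ S} => (j : Fin n))).charpoly * X ^ (n - S.card) := by
  classical
  set B := M.submatrix (fun i : {x // x ∈ S} => (i : Fin n))
      (fun j : {x // x ∈ S} => (j : Fin n)) with hB
  set C2 := M.submatrix (fun i : {x // x ∉ S} => (i : Fin n))
      (fun j : {x // x ∈ S} => (j : Fin n)) with hC2
  let e : {x // x ∈ S} ⊕ {x // x ∉ S} ≃ Fin n := Equiv.sumCompl (· ∈ S)
  have h1 : (reindex e.symm e.symm M) = fromBlocks B 0 C2 0 := by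
    ext i j
    rcases i with i | i <;> rcases j with j | j
    · simp [e, fromBlocks, hB]
    · simp [e, fromBlocks, hM _ _ j.2]
    · simp [e, fromBlocks, hC2]
    · simp [e, fromBlocks, hM _ _ j.2]
  have h2 : M.charpoly = (fromBlocks B (0 : Matrix {x // x ∈ S} {x // x ∉ S} ℝ) C2 0).charpoly := by
    rw [← h1, Matrix.charpoly_reindex]
  rw [h2, Matrix.charpoly_fromBlocks_zero₁₂]
  congr 1
  -- charpoly of the zero matrix
  have h3 : charmatrix (0 : Matrix {x // x ∉ S} {x // x ∉ S} ℝ) =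
      diagonal (fun _ => (X : ℝ[X])) := by
    ext i j
    by_cases h : i = j
    · subst h; simp
    · simp [charmatrix_apply_ne _ _ _ h, diagonal_apply_ne _ h]
  rw [Matrix.charpoly, h3, det_diagonal, Finset.prod_const, Finset.card_univ]
  congr 1
  have : Fintype.card {x // x ∉ S} = n - Fintype.card {x : Fin n // x ∈ S} := by
    rw [Fintype.card_subtype_compl, Fintype.card_fin]
  rw [this, Fintype.card_coe]

theorem not_P0_minus_implies_D_unstable (n : ℕ) (A : Matrix (Fin n) (Fin n) ℝ)
    (hminor : ∃ S : Finset (Fin n), S.Nonempty ∧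
      0 < (-1 : ℝ) ^ (S.card - 1) *
        (A.submatrix (fun i : {x // x ∈ S} => (i : Fin n))
          (fun j : {x // x ∈ S} => (j : Fin n))).det) :
    ∃ d : Fin n → ℝ, (∀ i, 0 < d i) ∧ ∃ μ : ℂ, 0 < μ.re ∧
      (((A * Matrix.diagonal d).map (Complex.ofReal)).charpoly).IsRoot μ := by
  classical
  obtain ⟨S, hSne, hdet⟩ := hminor
  set k := S.card with hk
  have hk1 : 1 ≤ k := Finset.card_pos.mpr hSne
  -- the family of matrices parameterized by a polynomial variable
  set dP : Fin n → ℝ[X] := fun i => if i ∈ S then 1 else X with hdP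
  set MP : Matrix (Fin n) (Fin n) ℝ[X] := (A.map Polynomial.C) * diagonal dP with hMP
  set c : ℝ[X] := MP.charpoly.coeff (n - k) with hc
  have heval : ∀ t : ℝ,
      ((A * diagonal (fun i => if i ∈ S then (1:ℝ) else t)).charpoly).coeff (n - k) =
        c.eval t := by
    intro t
    have hmap : MP.map (Polynomial.evalRingHom t) =
        A * diagonal (fun i => if i ∈ S then (1:ℝ) else t) := by
      rw [hMP, Matrix.map_mul]
      congr 1
      · ext i j
        simp
      · ext i j
        by_cases hij : i = j
        · subst hij
          by_cases h : i ∈ S <;> simp [hdP, h]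
        · simp [Matrix.map_apply, Matrix.diagonal_apply_ne _ hij]
    rw [← hmap, Matrix.charpoly_map, Polynomial.coeff_map, hc]
    simp
  -- the value at 0
  have h0 : c.eval 0 < 0 := by
    have hM0 : ∀ i j, j ∉ S →
        (A * diagonal (fun i => if i ∈ S then (1:ℝ) else 0)) i j = 0 := by
      intro i j hj
      rw [Matrix.mul_diagonal]
      simp [hj]
    have hsub : ((A * diagonal fun i => if i ∈ S then (1:ℝ) else 0).submatrix
          (fun i : {x // x ∈ S} => (i : Fin n)) (fun j : {x // x ∈ S} => (j : Fin n))) =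
        A.submatrix (fun i : {x // x ∈ S} => (i : Fin n))
          (fun j : {x // x ∈ S} => (j : Fin n)) := by
      ext i j
      simp [Matrix.mul_diagonal, j.2]
    have hcard : Fintype.card {x : Fin n // x ∈ S} = k := Fintype.card_coe S
    have hdet' := Matrix.det_eq_sign_charpoly_coeff
      (A.submatrix (fun i : {x // x ∈ S} => (i : Fin n)) (fun j : {x // x ∈ S} => (j : Fin n)))
    rw [hcard] at hdet'
    have hco : c.eval 0 =
        (A.submatrix (fun i : {x // x ∈ S} => (i : Fin n))
          (fun j : {x // x ∈ S} => (j : Fin n))).charpoly.coeff 0 := by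
      rw [← heval 0, charpoly_of_zero_cols S _ hM0, hsub, ← hk]
      have := Polynomial.coeff_mul_X_pow
        (A.submatrix (fun i : {x // x ∈ S} => (i : Fin n))
          (fun j : {x // x ∈ S} => (j : Fin n))).charpoly (n - k) 0
      rwa [zero_add] at this
    have hsq : ((-1 : ℝ) ^ k) * ((-1 : ℝ) ^ k) = 1 := by
      rw [← pow_add]
      exact (neg_one_pow_eq_one_iff_even (by norm_num)).mpr ⟨k, by ring⟩
    have hcoeff0 : (A.submatrix (fun i : {x // x ∈ S} => (i : Fin n))
          (fun j : {x // x ∈ S} => (j : Fin n))).charpoly.coeff 0 =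
        (-1 : ℝ) ^ k * (A.submatrix (fun i : {x // x ∈ S} => (i : Fin n))
          (fun j : {x // x ∈ S} => (j : Fin n))).det := by
      rw [hdet', ← mul_assoc, hsq, one_mul]
    rw [hco, hcoeff0]
    have hpow : (-1 : ℝ) ^ k = -((-1 : ℝ) ^ (k - 1)) := by
      conv_lhs => rw [show k = (k - 1) + 1 by omega]
      rw [pow_succ]
      ring
    rw [hpow, neg_mul]
    linarith [hdet]
  -- continuity: find a positive parameter value
  have hcont : Continuous fun t : ℝ => c.eval t := Polynomial.continuous c
  have hev : ∀ᶠ t in nhds (0:ℝ), c.eval t < 0 :=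
    (hcont.continuousAt (x := 0)).eventually_lt continuousAt_const h0
  obtain ⟨ε, hε, hball⟩ := Metric.eventually_nhds_iff.mp hev
  have ht0 : c.eval (ε / 2) < 0 := by
    apply hball
    rw [Real.dist_eq]
    rw [sub_zero, abs_of_pos (by linarith)]
    linarith
  set d : Fin n → ℝ := fun i => if i ∈ S then (1:ℝ) else ε / 2 with hd
  refine ⟨d, fun i => by by_cases h : i ∈ S <;> simp [hd, h] <;> linarith, ?_⟩
  set p : ℝ[X] := (A * diagonal d).charpoly with hp
  have hcoeffneg : p.coeff (n - k) < 0 := by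
    rw [hp, hd]
    rw [heval (ε / 2)]
    exact ht0
  have hmap2 : ((A * Matrix.diagonal d).map Complex.ofReal).charpoly =
      p.map (algebraMap ℝ ℂ) := by
    rw [hp]
    rw [show (Complex.ofReal : ℝ → ℂ) = ⇑(algebraMap ℝ ℂ) from rfl]
    exact Matrix.charpoly_map _ _
  by_contra hno
  push_neg at hno
  have hroots : ∀ z : ℂ, Polynomial.aeval z p = 0 → z.re ≤ 0 := by
    intro z hz
    by_contra hzre
    push_neg at hzre
    refine hno z hzre ?_
    rw [hmap2, Polynomial.IsRoot, Polynomial.eval_map, ← Polynomial.aeval_def]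
    exact hz
  have := coeff_nonneg_of_roots_re_nonpos p.natDegree p le_rfl
    (Matrix.charpoly_monic _) hroots (n - k)
  linarith
end
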